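/- In the setup below, every wall v ∈ V₁⁻ crosses U_0, and v crosses only finitely many of the walls U_j. -/

import Mathlib

open Set

variable {X : Type*}

/-- A wall: a subset with nonempty complement and nonempty itself. -/
def IsWall (h : Set X) : Prop := h.Nonempty ∧ hᶜ.Nonempty

/-- Walls `h` and `k` cross. -/
def Crosses (h k : Set X) : Prop :=
  (h ∩ k).Nonempty ∧ (h ∩ kᶜ).Nonempty ∧ (hᶜ ∩ k).Nonempty ∧ (hᶜ ∩ kᶜ).Nonempty

/-- The wall `u` lies in the halfspace `H` of the wall `w`. -/
def LiesIn (u H w : Set X) : Prop := u ≠ w ∧ (u ⊆ H ∨ uᶜ ⊆ H)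

/-- The wall `w` separates the walls `u` and `v`. -/
def Separates (w u v : Set X) : Prop :=
  u ≠ v ∧ u ≠ w ∧ v ≠ w ∧
  ∃ u' v' w', (u' = u ∨ u' = uᶜ) ∧ (v' = v ∨ v' = vᶜ) ∧ (w' = w ∨ w' = wᶜ) ∧
    u' ⊆ w' ∧ v' ⊆ w'ᶜ

/-- `S` contains a facing triple. -/
def HasFacingTriple (S : Set (Set X)) : Prop :=
  ∃ a ∈ S, ∃ b ∈ S, ∃ c ∈ S, a ≠ b ∧ a ≠ c ∧ b ≠ c ∧
    ∃ a' b' c', (a' = a ∨ a' = aᶜ) ∧ (b' = b ∨ b' = bᶜ) ∧ (c' = c ∨ c' = cᶜ) ∧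
      Disjoint a' b' ∧ Disjoint a' c' ∧ Disjoint b' c'

/-- `S` is inseparable with respect to the wall collection `W`. -/
def InseparableIn (W S : Set (Set X)) : Prop :=
  ∀ u ∈ S, ∀ v ∈ S, ∀ w ∈ W, Separates w u v → w ∈ S

/-- `S` is unidirectional: for each wall `w ∈ S`, at most one of the two halfspaces of `w`
contains infinitely many walls of `S`. -/
def Unidirectional (S : Set (Set X)) : Prop :=
  ∀ w ∈ S, {u ∈ S | LiesIn u w w}.Finite ∨ {u ∈ S | LiesIn u wᶜ w}.Finite

/-- `V` is a UBS in the wall collection `W`. -/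
def IsUBS (W V : Set (Set X)) : Prop :=
  V ⊆ W ∧ V.Infinite ∧ InseparableIn W V ∧ Unidirectional V ∧ ¬ HasFacingTriple V

/-- Almost-equivalence of sets of walls. -/
def AlmostEq (S T : Set (Set X)) : Prop := (S \ T).Finite ∧ (T \ S).Finite

/-- `U` is a minimal UBS in `W`. -/
def MinUBS (W U : Set (Set X)) : Prop :=
  IsUBS W U ∧ ∀ U', IsUBS W U' → U' ⊆ U → AlmostEq U' U

/-- `A ≺ B`: every wall of `B` crosses all but finitely many walls of `A`. -/
def Prec (A B : Set (Set X)) : Prop := ∀ b ∈ B, {a ∈ A | ¬ Crosses b a}.Finite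

/-- Distinct members of `W` determine distinct partitions. -/
def Admissible (W : Set (Set X)) : Prop := ∀ h ∈ W, ∀ k ∈ W, h ≠ k → h ≠ kᶜ

/-- No infinite subset of `W` consists of pairwise-crossing walls. -/
def NoInfCross (W : Set (Set X)) : Prop := ∀ S ⊆ W, S.Pairwise Crosses → S.Finite

/-- `W` has dimension at most `D`: every pairwise-crossing subset has cardinality at most `D`. -/
def DimLE (W : Set (Set X)) (D : ℕ) : Prop :=
  ∀ S ⊆ W, S.Pairwise Crosses → S.Finite ∧ S.ncard ≤ D

/-- `c` is a chain: an injective sequence of walls with `c n` separating `c (n-1)` and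
`c (n+1)` for `n ≥ 1`. -/
def IsChainSeq (c : ℕ → Set X) : Prop :=
  Function.Injective c ∧ ∀ n, Separates (c (n + 1)) (c n) (c (n + 2))

/-- The chain `c` is inextensible in `S`: no wall of `S` has a halfspace containing every
term of `c`. -/
def InextensibleIn (S : Set (Set X)) (c : ℕ → Set X) : Prop :=
  ¬ ∃ w ∈ S, ∃ H, (H = w ∨ H = wᶜ) ∧ ∀ n, LiesIn (c n) H w

/-- The inseparable closure in `W` of a set `C` of walls. -/
def insepClosure (W C : Set (Set X)) : Set (Set X) :=
  ⋂₀ {S | C ⊆ S ∧ S ⊆ W ∧ InseparableIn W S}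

/-- The sub-collection of `V ∖ U₁` (where `U₁` is the inseparable closure of the chain `c`)
consisting of walls crossing all but finitely many walls of `U₁`. -/
def V1plus (W V : Set (Set X)) (c : ℕ → Set X) : Set (Set X) :=
  {v ∈ V \ insepClosure W (Set.range c) |
    {u ∈ insepClosure W (Set.range c) | ¬ Crosses v u}.Finite}

/-- The complement of `V₁⁺` in `V₁ = V ∖ U₁`. -/
def V1minus (W V : Set (Set X)) (c : ℕ → Set X) : Set (Set X) :=
  (V \ insepClosure W (Set.range c)) \ V1plus W V c

/-! Choose halfspaces `h n` of the chain walls `c n` with `h 0 ⊇ h 1 ⊇ ⋯`. Walls having a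
halfspace squeezed between two of the `h n` form an inseparable set, so every wall of `U₁` is one.

If `v` crossed infinitely many `c j`, it would cross every `c K` from some index `j₀` on. A wall
of `U₁` not crossing `v` then has a halfspace lying between a halfspace of `v` and `h 0`. As
`v ∈ V₁⁻`, there are infinitely many such walls for one and the same halfspace `v₀` of `v`; they
form an inseparable, hence UBS, subset of `U₁` which misses every `c K` with `K ≥ j₀`, against the
minimality of `U₁`.

If `v` did not cross `c 0`, inextensibility of the chain forces a halfspace `v₀ ⊆ h 0` of `v`, and
then, as `v` crosses finitely many `c j`, a wall `c k` not crossing `v` with `v₀ ⊄ h k`. However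
`v` and `c k` are nested, either `v` separates `c 0` from `c k` (so `v ∈ U₁`), or `v, c 0, c k` is
a facing triple in `V`, or `v₀ ⊆ h k`, or `h 0` is everything. -/

def IsHalfspace (u s : Set X) : Prop := s = u ∨ s = uᶜ

namespace IsHalfspace

variable {u s t : Set X}

lemma self (u : Set X) : IsHalfspace u u := Or.inl rfl

lemma compl_self (u : Set X) : IsHalfspace u uᶜ := Or.inr rfl

lemma symm (hs : IsHalfspace u s) : IsHalfspace s u := by
  rcases hs with rfl | rfl
  · exact self _
  · exact Or.inr (compl_compl _).symm

lemma trans (hs : IsHalfspace u s) (ht : IsHalfspace s t) : IsHalfspace u t := by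
  rcases hs with rfl | rfl <;> rcases ht with rfl | rfl
  · exact self _
  · exact compl_self _
  · exact compl_self _
  · exact Or.inl (compl_compl _)

lemma compl (hs : IsHalfspace u s) : IsHalfspace u sᶜ := hs.trans (compl_self s)

lemma isWall (hu : IsWall u) (hs : IsHalfspace u s) : IsWall s := by
  rcases hs with rfl | rfl
  · exact hu
  · exact ⟨hu.2, by rw [compl_compl]; exact hu.1⟩

lemma ne {w : Set X} (huw : u ≠ w) (huw' : u ≠ wᶜ) (hs : IsHalfspace u s)
    (ht : IsHalfspace w t) : s ≠ t := by
  rintro rfl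
  rcases hs.trans ht.symm with h | h
  · exact huw h.symm
  · exact huw' (by rw [h, compl_compl])

end IsHalfspace

lemma LiesIn.of_isHalfspace {u w s H : Set X} (hs : IsHalfspace u s) (huw : u ≠ w)
    (hsH : s ⊆ H) : LiesIn u H w := by
  rcases hs with rfl | rfl
  · exact ⟨huw, Or.inl hsH⟩
  · exact ⟨huw, Or.inr hsH⟩

section Crosses

variable {u v s t : Set X}

lemma crosses_compl_right : Crosses v uᶜ ↔ Crosses v u := by
  simp only [Crosses, compl_compl]
  tauto

lemma crosses_compl_left : Crosses vᶜ u ↔ Crosses v u := by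
  simp only [Crosses, compl_compl]
  tauto

lemma crosses_congr_right (hs : IsHalfspace u s) : Crosses v s ↔ Crosses v u := by
  rcases hs with rfl | rfl
  · rfl
  · exact crosses_compl_right

lemma crosses_congr_left (hs : IsHalfspace v s) : Crosses s u ↔ Crosses v u := by
  rcases hs with rfl | rfl
  · rfl
  · exact crosses_compl_left

lemma Crosses.not_subset_left (h : Crosses v s) : ¬ v ⊆ s :=
  Set.inter_compl_nonempty_iff.1 h.2.1

lemma Crosses.not_subset_right (h : Crosses v s) : ¬ s ⊆ v := by
  rw [← Set.inter_compl_nonempty_iff, Set.inter_comm]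
  exact h.2.2.1

lemma Crosses.of_subset_of_subset {a b : Set X} (ha : Crosses v a) (hb : Crosses v b)
    (hbt : b ⊆ t) (hta : t ⊆ a) : Crosses v t :=
  ⟨hb.1.mono (Set.inter_subset_inter_right v hbt),
    ha.2.1.mono (Set.inter_subset_inter_right v (Set.compl_subset_compl.2 hta)),
    hb.2.2.1.mono (Set.inter_subset_inter_right vᶜ hbt),
    ha.2.2.2.mono (Set.inter_subset_inter_right vᶜ (Set.compl_subset_compl.2 hta))⟩

lemma exists_isHalfspace_subset_or_superset_of_not_crosses (h : ¬ Crosses v s) :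
    ∃ v', IsHalfspace v v' ∧ (v' ⊆ s ∨ s ⊆ v') := by
  by_contra! hv
  obtain ⟨hv₁, hv₂⟩ := hv v (IsHalfspace.self v)
  obtain ⟨hv₃, hv₄⟩ := hv vᶜ (IsHalfspace.compl_self v)
  refine h ⟨?_, Set.inter_compl_nonempty_iff.2 hv₁, ?_, Set.inter_compl_nonempty_iff.2 hv₃⟩
  · rw [Set.inter_comm, ← compl_compl v]
    exact Set.inter_compl_nonempty_iff.2 hv₄
  · rw [Set.inter_comm]
    exact Set.inter_compl_nonempty_iff.2 hv₂

end Crosses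

section Inseparable

variable {W C S T : Set (Set X)}

lemma subset_insepClosure (W C : Set (Set X)) : C ⊆ insepClosure W C :=
  fun _ hx => Set.mem_sInter.2 fun _ hS => hS.1 hx

lemma inseparableIn_insepClosure (W C : Set (Set X)) : InseparableIn W (insepClosure W C) :=
  fun u hu u' hu' w hw hsep => Set.mem_sInter.2 fun S hS =>
    hS.2.2 u (Set.mem_sInter.1 hu S hS) u' (Set.mem_sInter.1 hu' S hS) w hw hsep

lemma insepClosure_subset (hCS : C ⊆ S) (hSW : S ⊆ W) (hS : InseparableIn W S) :
    insepClosure W C ⊆ S :=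
  Set.sInter_subset_of_mem ⟨hCS, hSW, hS⟩

lemma InseparableIn.inter (hS : InseparableIn W S) (hT : InseparableIn W T) :
    InseparableIn W (S ∩ T) :=
  fun u hu u' hu' w hw hsep => ⟨hS u hu.1 u' hu'.1 w hw hsep, hT u hu.2 u' hu'.2 w hw hsep⟩

def wallsBetween (W P Q : Set (Set X)) : Set (Set X) :=
  {u ∈ W | ∃ s, IsHalfspace u s ∧ (∃ a ∈ P, a ⊆ s) ∧ ∃ b ∈ Q, s ⊆ b}

lemma subset_or_compl_subset_of_isHalfspace {a b s p r : Set X} (hp : IsHalfspace s p)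
    (has : a ⊆ s) (hsb : s ⊆ b) (hpr : p ⊆ r) : a ⊆ r ∨ bᶜ ⊆ r := by
  rcases hp with rfl | rfl
  · exact Or.inl (has.trans hpr)
  · exact Or.inr ((Set.compl_subset_compl.2 hsb).trans hpr)

lemma inseparableIn_wallsBetween {P Q : Set (Set X)}
    (hP : ∀ a ∈ P, ∀ a' ∈ P, (a ∩ a').Nonempty) (hQ : ∀ b ∈ Q, ∀ b' ∈ Q, (bᶜ ∩ b'ᶜ).Nonempty) :
    InseparableIn W (wallsBetween W P Q) := by
  rintro u ⟨-, s, hs, ⟨a, haP, has⟩, b, hbQ, hsb⟩ u' ⟨-, s', hs', ⟨a', haP', has'⟩, b', hbQ', hsb'⟩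
    w hw ⟨-, -, -, p, p', r, hp, hp', hr, hpr, hpr'⟩
  rcases subset_or_compl_subset_of_isHalfspace (hs.symm.trans hp) has hsb hpr with har | hbr <;>
    rcases subset_or_compl_subset_of_isHalfspace (hs'.symm.trans hp') has' hsb' hpr' with
      har' | hbr'
  · obtain ⟨x, hx, hx'⟩ := hP a haP a' haP'
    exact absurd (har hx) (har' hx')
  · exact ⟨hw, r, hr, ⟨a, haP, har⟩, b', hbQ', Set.compl_subset_compl.1 hbr'⟩
  · exact ⟨hw, rᶜ, IsHalfspace.compl hr, ⟨a', haP', har'⟩, b, hbQ, Set.compl_subset_comm.1 hbr⟩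
  · obtain ⟨x, hx, hx'⟩ := hQ b hbQ b' hbQ'
    exact absurd (hbr hx) (hbr' hx')

end Inseparable

section UBS

variable {W U S : Set (Set X)}

lemma Unidirectional.mono (hU : Unidirectional U) (hSU : S ⊆ U) : Unidirectional S := by
  intro w hw
  refine (hU w (hSU hw)).imp (fun hf => hf.subset ?_) (fun hf => hf.subset ?_) <;>
    exact fun u hu => ⟨hSU hu.1, hu.2⟩

lemma HasFacingTriple.mono (hS : HasFacingTriple S) (hSU : S ⊆ U) : HasFacingTriple U := by
  obtain ⟨a, ha, b, hb, c, hc, rest⟩ := hS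
  exact ⟨a, hSU ha, b, hSU hb, c, hSU hc, rest⟩

lemma IsUBS.of_subset (hU : IsUBS W U) (hSU : S ⊆ U) (hS : S.Infinite)
    (hSins : InseparableIn W S) : IsUBS W S :=
  ⟨hSU.trans hU.1, hS, hSins, hU.2.2.2.1.mono hSU, fun h => hU.2.2.2.2 (h.mono hSU)⟩

lemma MinUBS.diff_finite (hU : MinUBS W U) (hSU : S ⊆ U) (hS : S.Infinite)
    (hSins : InseparableIn W S) : (U \ S).Finite :=
  (hU.2 S (hU.1.of_subset hSU hS hSins) hSU).2

end UBS

lemma subset_of_consecutive_separating {u w a b r r' : Set X} (huw : u ≠ w) (huw' : u ≠ wᶜ)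
    (hr : IsHalfspace u r) (hr' : IsHalfspace w r') (ha : IsHalfspace u a)
    (hb : IsHalfspace w b) (har' : a ⊆ r') (hbr : b ⊆ rᶜ) : r ⊆ r' := by
  rcases hr.symm.trans ha with rfl | rfl
  · exact har'
  rcases hr'.symm.trans hb with rfl | rfl
  · exact absurd (hbr.antisymm har') (hr.compl.ne huw huw' hr').symm
  · exact Set.compl_subset_compl.1 hbr

structure IsNestedHalfspaces (c h : ℕ → Set X) : Prop where
  antitone : Antitone h
  isHalfspace : ∀ n, IsHalfspace (c n) (h n)
  nonempty : ∀ n, (h n).Nonempty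
  compl_nonempty : ∀ n, (h n)ᶜ.Nonempty

lemma IsChainSeq.exists_isNestedHalfspaces {W : Set (Set X)} {c : ℕ → Set X}
    (hc : IsChainSeq c) (hcW : ∀ n, c n ∈ W) (hWwall : ∀ h ∈ W, IsWall h)
    (hWadm : Admissible W) : ∃ h, IsNestedHalfspaces c h := by
  choose A B R hA hB hR hAR hBR using fun n => (hc.2 n).2.2.2
  have hRR : ∀ n, R n ⊆ R (n + 1) := fun n =>
    subset_of_consecutive_separating (hc.1.ne (by omega))
      (hWadm _ (hcW _) _ (hcW _) (hc.1.ne (by omega))) (hR n) (hR (n + 1)) (hA (n + 1)) (hB n)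
      (hAR (n + 1)) (hBR n)
  let h : ℕ → Set X := fun
    | 0 => (A 0)ᶜ
    | n + 1 => (R n)ᶜ
  have hh : ∀ n, IsHalfspace (c n) (h n)
    | 0 => IsHalfspace.compl (hA 0)
    | n + 1 => IsHalfspace.compl (hR n)
  refine ⟨h, ⟨antitone_nat_of_succ_le fun n => ?_, hh, fun n => ?_, fun n => ?_⟩⟩
  · cases n with
    | zero => exact Set.compl_subset_compl.2 (hAR 0)
    | succ n => exact Set.compl_subset_compl.2 (hRR n)
  · exact ((hh n).isWall (hWwall _ (hcW n))).1
  · exact ((hh n).isWall (hWwall _ (hcW n))).2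

namespace IsNestedHalfspaces

variable {W V U : Set (Set X)} {c h : ℕ → Set X} {v : Set X}

lemma not_compl_subset (hh : IsNestedHalfspaces c h) (m n : ℕ) : ¬ (h m)ᶜ ⊆ h n := by
  intro hsub
  rcases le_total m n with hmn | hnm
  · obtain ⟨x, hx⟩ := hh.compl_nonempty m
    exact hx (hh.antitone hmn (hsub hx))
  · obtain ⟨x, hx⟩ := hh.compl_nonempty n
    exact hx (hsub fun hxm => hx (hh.antitone hnm hxm))

lemma crosses_of_le_of_le (hh : IsNestedHalfspaces c h) {i j k : ℕ} (hi : Crosses v (c i))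
    (hj : Crosses v (c j)) (hik : i ≤ k) (hkj : k ≤ j) : Crosses v (h k) :=
  ((crosses_congr_right (hh.isHalfspace i)).2 hi).of_subset_of_subset
    ((crosses_congr_right (hh.isHalfspace j)).2 hj) (hh.antitone hkj) (hh.antitone hik)

lemma insepClosure_subset_wallsBetween (hh : IsNestedHalfspaces c h) (hcW : ∀ n, c n ∈ W) :
    insepClosure W (Set.range c) ⊆ wallsBetween W (Set.range h) (Set.range h) := by
  refine insepClosure_subset ?_ (fun _ hu => hu.1) (inseparableIn_wallsBetween ?_ ?_)
  · rintro _ ⟨n, rfl⟩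
    exact ⟨hcW n, h n, hh.isHalfspace n, ⟨h n, ⟨n, rfl⟩, subset_rfl⟩, h n, ⟨n, rfl⟩, subset_rfl⟩
  · rintro _ ⟨m, rfl⟩ _ ⟨n, rfl⟩
    exact (hh.nonempty (max m n)).mono
      (Set.subset_inter (hh.antitone (le_max_left m n)) (hh.antitone (le_max_right m n)))
  · rintro _ ⟨m, rfl⟩ _ ⟨n, rfl⟩
    exact (hh.compl_nonempty (min m n)).mono (Set.subset_inter
      (Set.compl_subset_compl.2 (hh.antitone (min_le_left m n)))
      (Set.compl_subset_compl.2 (hh.antitone (min_le_right m n))))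

lemma finite_crosses (hh : IsNestedHalfspaces c h) (hc : Function.Injective c)
    (hcW : ∀ n, c n ∈ W) (hU : MinUBS W (insepClosure W (Set.range c)))
    (hv : {u ∈ insepClosure W (Set.range c) | ¬ Crosses v u}.Infinite) :
    {j | Crosses v (c j)}.Finite := by
  set U := insepClosure W (Set.range c)
  by_contra hinf
  obtain ⟨j₀, hj₀⟩ := Set.Infinite.nonempty hinf
  have htail : ∀ K, j₀ ≤ K → Crosses v (h K) := fun K hK => by
    obtain ⟨j, hj, hKj⟩ := Set.Infinite.exists_gt hinf K
    exact hh.crosses_of_le_of_le hj₀ hj hK hKj.le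
  let F : Set X → Set (Set X) := fun v₀ => U ∩ wallsBetween W {v₀} {h 0}
  have hcover : {u ∈ U | ¬ Crosses v u} ⊆ F v ∪ F vᶜ := by
    rintro u ⟨huU, hnc⟩
    obtain ⟨huW, s, hs, ⟨_, ⟨m, rfl⟩, hms⟩, _, ⟨n, rfl⟩, hsn⟩ :=
      hh.insepClosure_subset_wallsBetween hcW huU
    rw [← crosses_congr_right hs] at hnc
    obtain ⟨v', hv', hv's | hsv'⟩ := exists_isHalfspace_subset_or_superset_of_not_crosses hnc
    · have hu : u ∈ wallsBetween W {v'} {h 0} :=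
        ⟨huW, s, hs, ⟨v', rfl, hv's⟩, h 0, rfl, hsn.trans (hh.antitone n.zero_le)⟩
      rcases hv' with rfl | rfl
      exacts [Or.inl ⟨huU, hu⟩, Or.inr ⟨huU, hu⟩]
    · have hK := (crosses_congr_left hv').2 (htail _ (le_max_right m j₀))
      exact absurd ((hh.antitone (le_max_left m j₀)).trans (hms.trans hsv')) hK.not_subset_right
  obtain ⟨v₀, hv₀, hF⟩ : ∃ v₀, IsHalfspace v v₀ ∧ (F v₀).Infinite := by
    rcases Set.infinite_union.1 (hv.mono hcover) with hF | hF
    exacts [⟨v, IsHalfspace.self v, hF⟩, ⟨vᶜ, IsHalfspace.compl_self v, hF⟩]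
  have hFins : InseparableIn W (F v₀) := by
    refine (inseparableIn_insepClosure W _).inter (inseparableIn_wallsBetween ?_ ?_)
    · rintro _ rfl _ rfl
      obtain ⟨x, hx, -⟩ := ((crosses_congr_left hv₀).2 (htail j₀ le_rfl)).1
      exact ⟨x, hx, hx⟩
    · rintro _ rfl _ rfl
      obtain ⟨x, hx⟩ := hh.compl_nonempty 0
      exact ⟨x, hx, hx⟩
  have hmiss : c '' Set.Ici j₀ ⊆ U \ F v₀ := by
    rintro _ ⟨K, hK, rfl⟩
    refine ⟨subset_insepClosure W _ ⟨K, rfl⟩, ?_⟩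
    rintro ⟨-, -, s, hs, ⟨_, rfl, hv₀s⟩, _, rfl, hs0⟩
    rcases (hh.isHalfspace K).symm.trans hs with rfl | rfl
    · exact ((crosses_congr_left hv₀).2 (htail K hK)).not_subset_left hv₀s
    · exact hh.not_compl_subset K 0 hs0
  exact ((Set.Ici_infinite j₀).image hc.injOn).mono hmiss
    (hU.diff_finite Set.inter_subset_left hF hFins)

lemma crosses_of_subset_zero_of_not_subset (hh : IsNestedHalfspaces c h) (hc : Function.Injective c)
    (hcV : ∀ n, c n ∈ V) (hV : ¬ HasFacingTriple V) (hU : InseparableIn W U)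
    (hcU : ∀ n, c n ∈ U) (hvW : v ∈ W) (hvV : v ∈ V) (hvU : v ∉ U) {v₀ : Set X} {k : ℕ}
    (hv₀ : IsHalfspace v v₀) (hv₀0 : v₀ ⊆ h 0) (hv₀k : ¬ v₀ ⊆ h k) : Crosses v (c k) := by
  by_contra hk
  have hcv : ∀ n, c n ≠ v := fun n hn => hvU (hn ▸ hcU n)
  have hc0k : c 0 ≠ c k := hc.ne fun h0k => hv₀k (h0k ▸ hv₀0)
  rw [← crosses_congr_right (hh.isHalfspace k)] at hk
  obtain ⟨v', hv', hsub | hsub⟩ := exists_isHalfspace_subset_or_superset_of_not_crosses hk <;>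
    obtain hv'' | hv'' := hv₀.symm.trans hv' <;> rw [hv''] at hsub
  · exact hv₀k hsub
  · obtain ⟨x, hx⟩ := hh.compl_nonempty 0
    by_cases hxv : x ∈ v₀
    · exact hx (hv₀0 hxv)
    · exact hx (hh.antitone k.zero_le (hsub hxv))
  · exact hvU (hU (c k) (hcU k) (c 0) (hcU 0) v hvW ⟨hc0k.symm, hcv k, hcv 0, h k, (h 0)ᶜ, v₀,
      hh.isHalfspace k, IsHalfspace.compl (hh.isHalfspace 0), hv₀, hsub,
      Set.compl_subset_compl.2 hv₀0⟩)
  · exact hV ⟨v, hvV, c 0, hcV 0, c k, hcV k, (hcv 0).symm, (hcv k).symm, hc0k, v₀, (h 0)ᶜ, h k,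
      hv₀, IsHalfspace.compl (hh.isHalfspace 0), hh.isHalfspace k,
      Set.disjoint_compl_right_iff_subset.2 hv₀0, Set.subset_compl_iff_disjoint_left.1 hsub,
      Set.disjoint_compl_left_iff_subset.2 (hh.antitone k.zero_le)⟩

lemma crosses_zero (hh : IsNestedHalfspaces c h) (hc : Function.Injective c)
    (hcV : ∀ n, c n ∈ V) (hV : ¬ HasFacingTriple V) (hinext : InextensibleIn V c)
    (hU : InseparableIn W U) (hcU : ∀ n, c n ∈ U) (hvW : v ∈ W) (hvV : v ∈ V) (hvU : v ∉ U)
    (hfin : {j | Crosses v (c j)}.Finite) : Crosses v (c 0) := by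
  have hcv : ∀ n, c n ≠ v := fun n hn => hvU (hn ▸ hcU n)
  have hnot_all : ∀ (H : Set X) (s : ℕ → Set X), IsHalfspace v H →
      (∀ n, IsHalfspace (c n) (s n)) → ¬ ∀ n, s n ⊆ H :=
    fun H s hH hs hsH => hinext
      ⟨v, hvV, H, hH, fun n => LiesIn.of_isHalfspace (hs n) (hcv n) (hsH n)⟩
  rw [← crosses_congr_right (hh.isHalfspace 0)]
  by_contra h0
  obtain ⟨v₀, hv₀, hv₀0 | h0v₀⟩ := exists_isHalfspace_subset_or_superset_of_not_crosses h0
  · obtain ⟨N, hN⟩ : ∃ N, ¬ v₀ ⊆ h N := by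
      by_contra! hall
      exact hnot_all v₀ᶜ (fun n => (h n)ᶜ) hv₀.compl (fun n => IsHalfspace.compl (hh.isHalfspace n))
        fun n => Set.compl_subset_compl.2 (hall n)
    obtain ⟨k, hNk, hk⟩ := (Set.Ici_infinite N).exists_notMem_finite hfin
    exact hk (hh.crosses_of_subset_zero_of_not_subset hc hcV hV hU hcU hvW hvV hvU hv₀ hv₀0
      fun hk' => hN (hk'.trans (hh.antitone hNk)))
  · exact hnot_all v₀ h hv₀ hh.isHalfspace fun n => (hh.antitone n.zero_le).trans h0v₀

end IsNestedHalfspaces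

theorem v1minus_crosses_U0_and_finitely_many_general (W : Set (Set X))
    (hWwall : ∀ h ∈ W, IsWall h)
    (hWadm : Admissible W)
    (V : Set (Set X)) (hV : IsUBS W V)
    (c : ℕ → Set X) (hc : IsChainSeq c) (hcV : ∀ n, c n ∈ V)
    (hinext : InextensibleIn V c)
    (hU1min : MinUBS W (insepClosure W (Set.range c))) :
    ∀ v ∈ V1minus W V c, Crosses v (c 0) ∧ {j : ℕ | Crosses v (c j)}.Finite := by
  rintro v ⟨⟨hvV, hvU⟩, hvplus⟩
  have hcW : ∀ n, c n ∈ W := fun n => hV.1 (hcV n)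
  obtain ⟨h, hh⟩ := hc.exists_isNestedHalfspaces hcW hWwall hWadm
  have hfin : {j | Crosses v (c j)}.Finite :=
    hh.finite_crosses hc.1 hcW hU1min fun hfin => hvplus ⟨⟨hvV, hvU⟩, hfin⟩
  exact ⟨hh.crosses_zero hc.1 hcV hV.2.2.2.2 hinext (inseparableIn_insepClosure W _)
    (fun n => subset_insepClosure W _ (Set.mem_range_self n)) (hV.1 hvV) hvV hvU hfin, hfin⟩

/-- Every wall of `V₁⁻` crosses `U 0` and crosses only finitely many terms of the chain. -/
theorem v1minus_crosses_U0_and_finitely_many (W : Set (Set X))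
    (hWc : W.Countable) (hWwall : ∀ h ∈ W, IsWall h)
    (hWadm : Admissible W) (hWnic : NoInfCross W)
    (V : Set (Set X)) (hV : IsUBS W V)
    (c : ℕ → Set X) (hc : IsChainSeq c) (hcV : ∀ n, c n ∈ V)
    (hinext : InextensibleIn V c)
    (hU1min : MinUBS W (insepClosure W (Set.range c)))
    (hU1V : insepClosure W (Set.range c) ⊆ V) :
    ∀ v ∈ V1minus W V c, Crosses v (c 0) ∧ {j : ℕ | Crosses v (c j)}.Finite :=
  v1minus_crosses_U0_and_finitely_many_general W hWwall hWadm V hV c hc hcV hinext hU1min
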